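/- Let n ≥ 1 and let {T_j : j ∈ Fin (n²)} be a family of n×n complex matrices that is an orthonormal basis of the space of n×n complex matrices with respect to the Hilbert–Schmidt inner product, i.e. Tr(T_i† T_j) = δ_{ij} and the family spans. Then the family {(1/n) · T_j T_j† : j ∈ Fin (n²)} is a POVM: each matrix (1/n) T_j T_j† is Hermitian and positive semidefinite, and ∑_{j} (1/n) T_j T_j† equals the n×n identity matrix. -/

import Mathlib

/-!
The `n² × n²` matrix whose columns are the vectorizations of the `T j` has orthonormal columns,
so, being square, it is unitary and its rows are orthonormal as well. Contracting that
completeness relation `∑ j, vec (T j) p * star (vec (T j) q) = δ p q` over the column index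
gives `∑ j, T j * (T j)ᴴ = n • 1`.
-/

open Matrix
open scoped ComplexOrder

namespace Matrix

variable {ι m n R : Type*} [Fintype m] [Fintype n] [CommRing R] [StarRing R]

def vecCols (T : ι → Matrix m n R) : Matrix (n × m) ι R :=
  of fun p j => vec (T j) p

theorem conjTranspose_vecCols_mul_vecCols (T : ι → Matrix m n R) :
    (vecCols T)ᴴ * vecCols T = of fun i j => ((T i)ᴴ * T j).trace := by
  ext i j
  exact star_vec_dotProduct_vec (T i) (T j)

theorem sum_vec_mul_star_vec_of_orthonormal [Fintype ι] [DecidableEq ι]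
    [DecidableEq m] [DecidableEq n] [IsStablyFiniteRing R] (T : ι → Matrix m n R)
    (horth : ∀ i j, ((T i)ᴴ * T j).trace = if i = j then 1 else 0)
    (hcard : Fintype.card ι = Fintype.card m * Fintype.card n) (p q : n × m) :
    ∑ j, vec (T j) p * star (vec (T j) q) = if p = q then 1 else 0 := by
  have hgram : (vecCols T)ᴴ * vecCols T = 1 := by
    rw [conjTranspose_vecCols_mul_vecCols]
    ext i j
    exact horth i j
  have e : ι ≃ n × m := Fintype.equivOfCardEq (by simp [hcard, mul_comm])
  have hrows := congrFun (congrFun ((mul_eq_one_comm_of_equiv e).mp hgram) p) q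
  simpa [vecCols, mul_apply, one_apply] using hrows

theorem sum_mul_conjTranspose_of_orthonormal [Fintype ι] [DecidableEq ι]
    [DecidableEq m] [DecidableEq n] [IsStablyFiniteRing R] (T : ι → Matrix m n R)
    (horth : ∀ i j, ((T i)ᴴ * T j).trace = if i = j then 1 else 0)
    (hcard : Fintype.card ι = Fintype.card m * Fintype.card n) :
    ∑ j, T j * (T j)ᴴ = (Fintype.card n : R) • 1 := by
  ext a c
  calc (∑ j, T j * (T j)ᴴ) a c = ∑ b, ∑ j, vec (T j) (b, a) * star (vec (T j) (b, c)) := by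
        simp only [sum_apply, mul_apply, conjTranspose_apply, vec]
        exact Finset.sum_comm
    _ = ((Fintype.card n : R) • (1 : Matrix m m R)) a c := by
        simp_rw [sum_vec_mul_star_vec_of_orthonormal T horth hcard, Prod.mk.injEq, true_and]
        simp [one_apply]

end Matrix

theorem povm_from_orthonormal_basis_general (n : ℕ) (hn : 1 ≤ n)
    (T : Fin (n ^ 2) → Matrix (Fin n) (Fin n) ℂ)
    (horth : ∀ i j, ((T i)ᴴ * T j).trace = if i = j then 1 else 0) :
    (∀ j, ((1 / (n : ℂ)) • (T j * (T j)ᴴ)).IsHermitian) ∧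
    (∀ j, ((1 / (n : ℂ)) • (T j * (T j)ᴴ)).PosSemidef) ∧
    ∑ j, (1 / (n : ℂ)) • (T j * (T j)ᴴ) = (1 : Matrix (Fin n) (Fin n) ℂ) := by
  have hpsd : ∀ j, ((1 / (n : ℂ)) • (T j * (T j)ᴴ)).PosSemidef := fun j =>
    (posSemidef_self_mul_conjTranspose (T j)).smul (by positivity)
  refine ⟨fun j => (hpsd j).isHermitian, hpsd, ?_⟩
  have hn0 : (n : ℂ) ≠ 0 := by exact_mod_cast Nat.one_le_iff_ne_zero.mp hn
  rw [← Finset.smul_sum, sum_mul_conjTranspose_of_orthonormal T horth (by simp [sq]),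
    Fintype.card_fin, smul_smul, one_div_mul_cancel hn0, one_smul]

/-- **POVM construction from an orthonormal basis of matrices.**
If `T : Fin (n^2) → Matrix (Fin n) (Fin n) ℂ` is orthonormal with respect to the
Hilbert–Schmidt inner product `⟨A, B⟩ = Tr(Aᴴ B)` and spans the whole matrix space,
then the family `(1/n) • T j * (T j)ᴴ` is a POVM: each element is Hermitian and
positive semidefinite, and the family sums to the identity. -/
theorem povm_from_orthonormal_basis (n : ℕ) (hn : 1 ≤ n)
    (T : Fin (n ^ 2) → Matrix (Fin n) (Fin n) ℂ)
    (horth : ∀ i j, ((T i)ᴴ * T j).trace = if i = j then 1 else 0)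
    (hspan : Submodule.span ℂ (Set.range T) = ⊤) :
    (∀ j, ((1 / (n : ℂ)) • (T j * (T j)ᴴ)).IsHermitian) ∧
    (∀ j, ((1 / (n : ℂ)) • (T j * (T j)ᴴ)).PosSemidef) ∧
    ∑ j, (1 / (n : ℂ)) • (T j * (T j)ᴴ) = (1 : Matrix (Fin n) (Fin n) ℂ) :=
  povm_from_orthonormal_basis_general n hn T horth
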